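/- Let q be a prime power, k < n ≤ m, α = (α_1,...,α_n) ∈ F_{q^m}^n with the α_i linearly independent over F_q, η ∈ F_{q^m}*, 0 ≤ h ≤ k-1. Let C₁ ⊆ F_{q^m}^n be the twisted Gabidulin code with one twist at position h with t = 0, i.e., spanned by rows (α_j^{q^i})_j for i ∈ {0,...,k-1}\{h} and the row (α_j^{q^h} + η α_j^{q^k})_j. Then the rank-metric covering radius of C₁ equals n-k, i.e., max over u ∈ F_{q^m}^n of min over c ∈ C₁ of the rank weight of u - c equals n - k. -/

import Mathlib

/-!
A word of the twisted code is the evaluation at `α` of `∑_{i<k} μ_i x^{q^i} + η μ_h x^{q^k}`, so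
`C₁` lies in the Gabidulin code `G` of linearized polynomials of `q`-degree at most `k`. A nonzero
such polynomial has at most `q ^ k` roots, so its kernel has `F_q`-dimension at most `k` and,
the `α_j` being independent, its evaluation has rank weight at least `n - k`.

The Moore row `u₀ = (α_j^{q^h})_j` lies in `G` but not in `C₁` because `η ≠ 0`; hence every
`u₀ - c` with `c ∈ C₁` is a nonzero word of `G`, at rank distance at least `n - k`. Conversely
`C₁` has dimension `k` (the encoding is injective), and every word agrees with some codeword
outside at most `n - k` coordinates, which bounds its rank distance to `C₁` by `n - k`.
-/

open Module Polynomial Submodule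

section LinearizedPoly

variable {R : Type*} [Semiring R] (q : ℕ) {k : ℕ}

noncomputable def linearizedPoly (c : Fin (k + 1) → R) : R[X] :=
  ∑ i : Fin (k + 1), monomial (q ^ (i : ℕ)) (c i)

theorem natDegree_linearizedPoly_le (hq : 0 < q) (c : Fin (k + 1) → R) :
    (linearizedPoly q c).natDegree ≤ q ^ k :=
  natDegree_sum_le_of_forall_le _ _ fun i _ => (natDegree_monomial_le _).trans <|
    Nat.pow_le_pow_right hq (Nat.le_of_lt_succ i.2)

theorem coeff_linearizedPoly (hq : 1 < q) (c : Fin (k + 1) → R) (i : Fin (k + 1)) :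
    (linearizedPoly q c).coeff (q ^ (i : ℕ)) = c i := by
  simp [linearizedPoly, coeff_monomial, (Nat.pow_right_injective hq).eq_iff, Fin.val_inj]

theorem linearizedPoly_ne_zero (hq : 1 < q) {c : Fin (k + 1) → R} (hc : c ≠ 0) :
    linearizedPoly q c ≠ 0 := by
  obtain ⟨i, hi⟩ := Function.ne_iff.mp hc
  exact fun h0 => hi (by rw [← coeff_linearizedPoly q hq c i, h0, coeff_zero]; rfl)

end LinearizedPoly

section LinearizedMap

variable (Fq : Type*) {K : Type*} [Field Fq] [Fintype Fq] [Field K] [Algebra Fq K] {k : ℕ}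

noncomputable def linearizedMap (c : Fin (k + 1) → K) : K →ₗ[Fq] K :=
  ∑ i, c i • ((FiniteField.frobeniusAlgHom Fq K) ^ (i : ℕ)).toLinearMap

theorem linearizedMap_apply (c : Fin (k + 1) → K) (x : K) :
    linearizedMap Fq c x = ∑ i, c i * x ^ Fintype.card Fq ^ (i : ℕ) := by
  simp [linearizedMap, FiniteField.coe_frobeniusAlgHom, pow_iterate]

theorem eval_linearizedPoly (c : Fin (k + 1) → K) (x : K) :
    (linearizedPoly (Fintype.card Fq) c).eval x = linearizedMap Fq c x := by
  simp [linearizedPoly, linearizedMap_apply, eval_finsetSum]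

theorem finrank_ker_linearizedMap_le [Fintype K] {c : Fin (k + 1) → K} (hc : c ≠ 0) :
    finrank Fq (LinearMap.ker (linearizedMap Fq c)) ≤ k := by
  classical
  have hq : 1 < Fintype.card Fq := Fintype.one_lt_card
  set P := linearizedPoly (Fintype.card Fq) c
  have hroots : (LinearMap.ker (linearizedMap Fq c) : Set K).toFinset.val ⊆ P.roots := by
    intro x hx
    rw [mem_roots (linearizedPoly_ne_zero _ hq hc), IsRoot, eval_linearizedPoly]
    simpa using hx
  rw [← Nat.pow_le_pow_iff_right hq, ← card_eq_pow_finrank]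
  calc Fintype.card (LinearMap.ker (linearizedMap Fq c))
      = (LinearMap.ker (linearizedMap Fq c) : Set K).toFinset.card := by simp
    _ ≤ P.natDegree := card_le_degree_of_subset_roots hroots
    _ ≤ Fintype.card Fq ^ k := natDegree_linearizedPoly_le _ Fintype.card_pos c

end LinearizedMap

section RankMetric

variable (Fq : Type*) {K ι : Type*} [Field Fq] [Field K] [Algebra Fq K]

noncomputable def rankWeight (x : ι → K) : ℕ := finrank Fq (span Fq (Set.range x))

noncomputable def rankDist (C : Submodule K (ι → K)) (u : ι → K) : ℕ :=
  sInf {w | ∃ c ∈ C, w = rankWeight Fq (u - c)}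

noncomputable def rankCoveringRadius (C : Submodule K (ι → K)) : ℕ :=
  sSup {d | ∃ u, d = rankDist Fq C u}

variable {Fq}

@[simp]
theorem rankWeight_zero : rankWeight Fq (0 : ι → K) = 0 := by
  rw [rankWeight, span_eq_bot.mpr (by rintro _ ⟨j, rfl⟩; rfl), finrank_bot]

theorem rankWeight_le_card_of_eq_zero [DecidableEq K] {x : ι → K} (T : Finset ι)
    (hx : ∀ j ∉ T, x j = 0) : rankWeight Fq x ≤ T.card := by
  have hsub : Set.range x ⊆ insert 0 (T.image x : Set K) := by
    rintro _ ⟨j, rfl⟩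
    by_cases hj : j ∈ T
    · exact Set.mem_insert_of_mem _ (Finset.mem_image_of_mem x hj)
    · rw [hx j hj]; exact Set.mem_insert _ _
  calc rankWeight Fq x ≤ finrank Fq (span Fq (T.image x : Set K)) := by
        refine Submodule.finrank_mono ?_
        simpa [span_insert_zero] using span_mono (R := Fq) hsub
    _ ≤ T.card := (finrank_span_finset_le_card _).trans Finset.card_image_le

theorem card_le_rankWeight_comp_add_finrank_ker [FiniteDimensional Fq K] {n : ℕ}
    {v : Fin n → K} (hv : LinearIndependent Fq v) (f : K →ₗ[Fq] K) :
    n ≤ rankWeight Fq (f ∘ v) + finrank Fq (LinearMap.ker f) := by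
  set W := span Fq (Set.range v)
  have hrange : LinearMap.range (f.domRestrict W) = span Fq (Set.range (f ∘ v)) := by
    rw [LinearMap.range_domRestrict, map_span, Set.range_comp]
  have hker : finrank Fq (LinearMap.ker (f.domRestrict W)) ≤ finrank Fq (LinearMap.ker f) := by
    rw [LinearMap.ker_domRestrict, ← finrank_map_subtype_eq]
    exact Submodule.finrank_mono (by simp)
  have := LinearMap.finrank_range_add_finrank_ker (f.domRestrict W)
  rw [hrange, finrank_span_eq_card hv, Fintype.card_fin] at this
  unfold rankWeight
  omega

theorem exists_sub_mem_eq_zero_off [Fintype ι] [DecidableEq ι] (V : Submodule K (ι → K))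
    (u : ι → K) :
    ∃ T : Finset ι, T.card ≤ Fintype.card ι - finrank K V ∧ ∃ c ∈ V, ∀ j ∉ T, (u - c) j = 0 := by
  -- unit vectors `e (a t)` whose images form a basis of `(ι → K) ⧸ V`
  obtain ⟨κ, a, ha, hspan, hli⟩ := exists_linearIndependent' K (V.mkQ ∘ Pi.basisFun K ι)
  have : Fintype κ := Fintype.ofInjective a ha
  have hcard : Fintype.card κ ≤ Fintype.card ι - finrank K V := by
    have := hli.fintype_card_le_finrank
    have := V.finrank_quotient_add_finrank
    rw [finrank_fintype_fun_eq_card] at this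
    omega
  obtain ⟨w, hw, hwu⟩ : ∃ w ∈ span K (Set.range (Pi.basisFun K ι ∘ a)), V.mkQ w = V.mkQ u := by
    have hu : V.mkQ u ∈ span K (Set.range (V.mkQ ∘ Pi.basisFun K ι ∘ a)) := by
      rw [Function.comp_assoc] at hspan
      rw [hspan, Set.range_comp, ← map_span, Basis.span_eq, Submodule.map_top, range_mkQ]
      exact mem_top
    rwa [Set.range_comp, ← map_span, mem_map] at hu
  refine ⟨Finset.univ.image a, (Finset.card_image_of_injective _ ha).trans_le hcard, u - w, ?_, ?_⟩
  · rw [← Submodule.Quotient.mk_eq_zero, Submodule.Quotient.mk_sub]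
    simpa [sub_eq_zero] using hwu.symm
  · intro j hj
    obtain ⟨μ, rfl⟩ := (mem_span_range_iff_exists_fun K).mp hw
    simp_all [Finset.sum_apply]

theorem rankDist_le {C : Submodule K (ι → K)} {c : ι → K} (hc : c ∈ C) (u : ι → K) :
    rankDist Fq C u ≤ rankWeight Fq (u - c) :=
  Nat.sInf_le ⟨c, hc, rfl⟩

theorem rankDist_le_card_sub_finrank [Fintype ι] (C : Submodule K (ι → K)) (u : ι → K) :
    rankDist Fq C u ≤ Fintype.card ι - finrank K C := by
  classical
  obtain ⟨T, hT, c, hc, hzero⟩ := exists_sub_mem_eq_zero_off C u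
  exact (rankDist_le hc u).trans ((rankWeight_le_card_of_eq_zero T hzero).trans hT)

theorem le_rankDist_of_mem_of_notMem {C D : Submodule K (ι → K)} (hCD : C ≤ D) {u : ι → K}
    (huD : u ∈ D) (huC : u ∉ C) {r : ℕ} (hD : ∀ x ∈ D, x ≠ 0 → r ≤ rankWeight Fq x) :
    r ≤ rankDist Fq C u := by
  refine le_csInf ⟨_, 0, C.zero_mem, rfl⟩ ?_
  rintro _ ⟨c, hc, rfl⟩
  exact hD _ (D.sub_mem huD (hCD hc)) (sub_ne_zero.mpr fun h => huC (h ▸ hc))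

theorem rankCoveringRadius_eq_of_forall_le {C : Submodule K (ι → K)} {r : ℕ}
    (hle : ∀ u, rankDist Fq C u ≤ r) {u₀ : ι → K} (hge : r ≤ rankDist Fq C u₀) :
    rankCoveringRadius Fq C = r := by
  have hbdd : BddAbove {d | ∃ u, d = rankDist Fq C u} := ⟨r, by rintro _ ⟨u, rfl⟩; exact hle u⟩
  refine le_antisymm (csSup_le ⟨_, u₀, rfl⟩ ?_) (hge.trans (le_csSup hbdd ⟨u₀, rfl⟩))
  rintro _ ⟨u, rfl⟩
  exact hle u

end RankMetric

section Gabidulin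

variable (Fq : Type*) {K : Type*} [Field Fq] [Fintype Fq] [Field K] [Algebra Fq K] {n : ℕ}
  (α : Fin n → K) (k : ℕ)

noncomputable def gabidulinEncoder : (Fin (k + 1) → K) →ₗ[K] (Fin n → K) :=
  Fintype.linearCombination K fun i j => α j ^ Fintype.card Fq ^ (i : ℕ)

theorem gabidulinEncoder_apply (c : Fin (k + 1) → K) :
    gabidulinEncoder Fq α k c = linearizedMap Fq c ∘ α := by
  ext j
  simp [gabidulinEncoder, Fintype.linearCombination_apply, linearizedMap_apply]

variable [Fintype K] {α}

theorem sub_le_rankWeight_gabidulinEncoder (hα : LinearIndependent Fq α) {c : Fin (k + 1) → K}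
    (hc : c ≠ 0) : n - k ≤ rankWeight Fq (gabidulinEncoder Fq α k c) := by
  have := card_le_rankWeight_comp_add_finrank_ker hα (linearizedMap Fq c)
  have := finrank_ker_linearizedMap_le Fq hc
  rw [gabidulinEncoder_apply]
  omega

theorem gabidulinEncoder_injective (hα : LinearIndependent Fq α) (hkn : k < n) :
    Function.Injective (gabidulinEncoder Fq α k) := by
  refine (injective_iff_map_eq_zero _).mpr fun c hc => ?_
  by_contra hc0
  have := sub_le_rankWeight_gabidulinEncoder Fq k hα hc0
  rw [hc, rankWeight_zero] at this
  omega

end Gabidulin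

section Twist

variable {K : Type*} [Field K] {k : ℕ} (η : K) (h : Fin k)

def twistedCoeffs : (Fin k → K) →ₗ[K] (Fin (k + 1) → K) where
  toFun μ := Fin.snoc μ (η * μ h)
  map_add' μ ν := by ext i; refine Fin.lastCases ?_ (fun i => ?_) i <;> simp [mul_add]
  map_smul' a μ := by ext i; refine Fin.lastCases ?_ (fun i => ?_) i <;> simp [mul_left_comm]

theorem twistedCoeffs_injective : Function.Injective (twistedCoeffs η h) := fun μ ν hμν => by
  simpa [twistedCoeffs] using congrArg Fin.init hμν

theorem single_notMem_range_twistedCoeffs {η : K} (hη : η ≠ 0) :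
    Pi.single h.castSucc 1 ∉ LinearMap.range (twistedCoeffs η h) := by
  rintro ⟨μ, hμ⟩
  have hμh : μ h = 1 := by simpa [twistedCoeffs] using congrFun hμ h.castSucc
  have hlast : η * μ h = 0 := by simpa [twistedCoeffs] using congrFun hμ (Fin.last k)
  exact hη (by simpa [hμh] using hlast)

end Twist

theorem span_range_twistedRows (Fq : Type*) {K : Type*} [Field Fq] [Fintype Fq] [Field K]
    [Algebra Fq K] {n k : ℕ} (α : Fin n → K) (η : K) (h : Fin k) :
    span K (Set.range fun (i : Fin k) (j : Fin n) =>
        if i = h then α j ^ Fintype.card Fq ^ (h : ℕ) + η * α j ^ Fintype.card Fq ^ k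
        else α j ^ Fintype.card Fq ^ (i : ℕ)) =
      LinearMap.range (gabidulinEncoder Fq α k ∘ₗ twistedCoeffs η h) := by
  rw [← Fintype.range_linearCombination]
  congr 1
  ext i j
  rcases eq_or_ne i h with rfl | hi <;>
    simp [gabidulinEncoder_apply, linearizedMap_apply, Fin.sum_univ_castSucc, twistedCoeffs,
      Pi.single_apply, *]

theorem C1_covering_radius_general {Fq K : Type*} [Field Fq] [Fintype Fq] [Field K] [Fintype K]
    [Algebra Fq K] (q n k h : ℕ) (hq : Fintype.card Fq = q)
    (hkn : k < n) (hh : h < k)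
    (α : ℕ → K) (hα : LinearIndependent Fq (fun i : Fin n => α (i:ℕ)))
    (η : K) (hη : η ≠ 0) :
    sSup {d : ℕ | ∃ u : Fin n → K,
        d = sInf {w : ℕ | ∃ c ∈ Submodule.span K (Set.range (fun i : Fin k => fun j : Fin n =>
              if (i:ℕ) = h then α (j:ℕ) ^ q ^ h + η * α (j:ℕ) ^ q ^ k
              else α (j:ℕ) ^ q ^ (i:ℕ))),
            w = Module.finrank Fq (Submodule.span Fq (Set.range (u - c)))}} = n - k := by
  subst hq
  lift h to Fin k using hh
  simp only [Fin.val_inj]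
  change rankCoveringRadius Fq _ = n - k
  rw [span_range_twistedRows Fq (fun j : Fin n => α j)]
  set G := gabidulinEncoder Fq (fun j : Fin n => α j) k
  have hG : Function.Injective G := gabidulinEncoder_injective Fq k hα hkn
  refine rankCoveringRadius_eq_of_forall_le (fun u => ?_) (u₀ := G (Pi.single h.castSucc 1)) ?_
  · have hGT : Function.Injective (G ∘ₗ twistedCoeffs η h) :=
      hG.comp (twistedCoeffs_injective η h)
    simpa [LinearMap.finrank_range_of_inj hGT] using
      rankDist_le_card_sub_finrank (Fq := Fq) (LinearMap.range (G ∘ₗ twistedCoeffs η h)) u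
  · refine le_rankDist_of_mem_of_notMem (LinearMap.range_comp_le_range _ _)
      (LinearMap.mem_range_self _ _) ?_ ?_
    · rintro ⟨μ, hμ⟩
      exact single_notMem_range_twistedCoeffs h hη ⟨μ, hG hμ⟩
    · rintro _ ⟨c, rfl⟩ hc
      exact sub_le_rankWeight_gabidulinEncoder Fq k hα (by rintro rfl; simp at hc)

/-- the rank-metric covering radius of the one-twist twisted Gabidulin code
`C₁` (with `t = 0`) equals `n - k`:
`max_{u ∈ F_{q^m}^n} min_{c ∈ C₁} rk(u - c) = n - k`. -/
theorem C1_covering_radius {Fq K : Type*} [Field Fq] [Fintype Fq] [Field K] [Fintype K]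
    [Algebra Fq K] (q m n k h : ℕ) (hq : Fintype.card Fq = q) (hK : Fintype.card K = q ^ m)
    (hkn : k < n) (hnm : n ≤ m) (hh : h < k)
    (α : ℕ → K) (hα : LinearIndependent Fq (fun i : Fin n => α (i:ℕ)))
    (η : K) (hη : η ≠ 0) :
    sSup {d : ℕ | ∃ u : Fin n → K,
        d = sInf {w : ℕ | ∃ c ∈ Submodule.span K (Set.range (fun i : Fin k => fun j : Fin n =>
              if (i:ℕ) = h then α (j:ℕ) ^ q ^ h + η * α (j:ℕ) ^ q ^ k
              else α (j:ℕ) ^ q ^ (i:ℕ))),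
            w = Module.finrank Fq (Submodule.span Fq (Set.range (u - c)))}} = n - k :=
  C1_covering_radius_general q n k h hq hkn hh α hα η hη
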